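/- arXiv:2206.03324 — 4 statements merged into one kernel-verified Lean document; each statement's English description precedes it below -/
import Mathlib

section
/- If a matching σ, a price vector p ∈ ℝ^K and a payoff vector π ∈ ℝ^N satisfy α-complementary slackness with respect to the weights w, then for every fractional matching φ ∈ Φ one has Σ_{i=1}^N w_{i,σ(i)} ≥ (1−α) · Σ_{i=1}^N Σ_{j=1}^K φ_{i,j} · w_{i,j}; that is, σ attains at least a (1−α) fraction of the maximum weight over all fractional matchings. -/
/-- If a matching `σ`, a price vector `p` and a payoff vector `π` satisfy
`α`-complementary slackness with respect to the weights `w`, then `σ` attains at least a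
`(1 − α)` fraction of the maximum weight over all fractional matchings `φ ∈ Φ`. -/
theorem alpha_complementary_slackness_implies_approx_max_weight
    (N K : ℕ) (hN : 0 < N) (hK : 0 < K)
    (w : Fin N → Fin K → ℝ) (hw : ∀ i j, 0 ≤ w i j)
    (α : ℝ) (hα : 0 ≤ α)
    (σ : Fin N → Option (Fin K))
    (hmatching : ∀ i i', i ≠ i' → σ i = none ∨ σ i ≠ σ i')
    (p : Fin K → ℝ) (π : Fin N → ℝ)
    -- (i) prices of unmatched servers vanish, prices are nonnegative
    (hp_unmatched : ∀ j, (∀ i, σ i ≠ some j) → p j = 0)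
    (hp_nonneg : ∀ j, 0 ≤ p j)
    -- (ii) payoffs are the best payoff at current prices, capped below by 0
    (hπ : ∀ i, π i =
      max ((Finset.univ : Finset (Fin K)).sup'
        (Finset.univ_nonempty_iff.mpr (Fin.pos_iff_nonempty.mp hK))
        (fun j => w i j - p j)) 0)
    -- (iii) unmatched queues have zero payoff; matched queues have positive weight and
    -- approximately tight payoff-plus-price
    (hπ_unmatched : ∀ i, σ i = none → π i = 0)
    (hmatched : ∀ i j, σ i = some j → 0 < w i j ∧ π i + p j ≤ (1 + α) * w i j)
    -- φ is a fractional matching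
    (φ : Fin N → Fin K → ℝ)
    (hφ_nonneg : ∀ i j, 0 ≤ φ i j)
    (hφ_row : ∀ i, ∑ j, φ i j ≤ 1)
    (hφ_col : ∀ j, ∑ i, φ i j ≤ 1) :
    (1 - α) * ∑ i, ∑ j, φ i j * w i j ≤ ∑ i, (σ i).elim 0 (fun j => w i j) := by

  set S := ∑ i, (σ i).elim 0 (fun j => w i j) with hSdef
  have hπ_nonneg : ∀ i, 0 ≤ π i := fun i => by rw [hπ i]; exact le_max_right _ _
  have hbound : ∀ i j, w i j ≤ π i + p j := by
    intro i j
    have h1 : w i j - p j ≤ π i := by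
      rw [hπ i]
      exact le_trans (Finset.le_sup' (fun j => w i j - p j) (Finset.mem_univ j)) (le_max_left _ _)
    linarith
  have hT_nonneg : 0 ≤ ∑ i, ∑ j, φ i j * w i j :=
    Finset.sum_nonneg fun i _ => Finset.sum_nonneg fun j _ =>
      mul_nonneg (hφ_nonneg i j) (hw i j)
  have hS_nonneg : 0 ≤ S := by
    apply Finset.sum_nonneg; intro i _
    cases h : σ i with
    | none => simp
    | some j => simpa using hw i j
  -- Step 2: primal value bounded by dual value
  have step2 : ∑ i, ∑ j, φ i j * w i j ≤ (∑ i, π i) + (∑ j, p j) := by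
    have h1 : ∑ i, ∑ j, φ i j * w i j ≤ ∑ i, ∑ j, φ i j * (π i + p j) := by
      refine Finset.sum_le_sum fun i _ => Finset.sum_le_sum fun j _ => ?_
      exact mul_le_mul_of_nonneg_left (hbound i j) (hφ_nonneg i j)
    have h2 : ∑ i, ∑ j, φ i j * (π i + p j)
        = (∑ i, π i * ∑ j, φ i j) + (∑ j, p j * ∑ i, φ i j) := by
      have hA : ∀ i : Fin N, ∑ j, φ i j * (π i + p j)
          = π i * ∑ j, φ i j + ∑ j, φ i j * p j := by
        intro i
        rw [Finset.mul_sum, ← Finset.sum_add_distrib]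
        exact Finset.sum_congr rfl fun j _ => by ring
      rw [Finset.sum_congr rfl fun i _ => hA i, Finset.sum_add_distrib]
      congr 1
      rw [Finset.sum_comm]
      refine Finset.sum_congr rfl fun j _ => ?_
      rw [Finset.mul_sum]
      exact Finset.sum_congr rfl fun i _ => by ring
    have h3 : (∑ i, π i * ∑ j, φ i j) ≤ ∑ i, π i :=
      Finset.sum_le_sum fun i _ => mul_le_of_le_one_right (hπ_nonneg i) (hφ_row i)
    have h4 : (∑ j, p j * ∑ i, φ i j) ≤ ∑ j, p j :=
      Finset.sum_le_sum fun j _ => mul_le_of_le_one_right (hp_nonneg j) (hφ_col j)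
    calc ∑ i, ∑ j, φ i j * w i j ≤ ∑ i, ∑ j, φ i j * (π i + p j) := h1
      _ = _ := h2
      _ ≤ (∑ i, π i) + (∑ j, p j) := add_le_add h3 h4
  -- Step 3: dual value bounded by (1+α) * matching value
  have hpsum : (∑ j, p j) ≤ ∑ i, (σ i).elim 0 p := by
    have key : ∀ j : Fin K, p j ≤ ∑ i, (if σ i = some j then p j else 0) := by
      intro j
      by_cases h : ∀ i, σ i ≠ some j
      · rw [hp_unmatched j h]
        exact Finset.sum_nonneg fun i _ => by by_cases h : σ i = some j <;> simp [h, hp_nonneg j]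
      · push_neg at h
        obtain ⟨i₀, hi₀⟩ := h
        have := Finset.single_le_sum (f := fun i => if σ i = some j then p j else 0)
          (fun i _ => by by_cases h : σ i = some j <;> simp [h, hp_nonneg j]) (Finset.mem_univ i₀)
        simpa [hi₀] using this
    calc (∑ j, p j) ≤ ∑ j, ∑ i, (if σ i = some j then p j else 0) :=
          Finset.sum_le_sum fun j _ => key j
      _ = ∑ i, ∑ j, (if σ i = some j then p j else 0) := Finset.sum_comm
      _ = ∑ i, (σ i).elim 0 p := by
          refine Finset.sum_congr rfl fun i _ => ?_
          cases h : σ i with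
          | none => simp [h]
          | some j₀ => simp [h]
  have step3 : (∑ i, π i) + (∑ j, p j) ≤ (1 + α) * S := by
    have h5 : (∑ i, π i) + (∑ j, p j) ≤ ∑ i, (π i + (σ i).elim 0 p) := by
      rw [Finset.sum_add_distrib]
      exact add_le_add le_rfl hpsum
    have h6 : ∑ i, (π i + (σ i).elim 0 p) ≤ ∑ i, (1 + α) * (σ i).elim 0 (fun j => w i j) := by
      refine Finset.sum_le_sum fun i _ => ?_
      cases h : σ i with
      | none => simp [hπ_unmatched i h]
      | some j => simpa using (hmatched i j h).2
    rw [hSdef, Finset.mul_sum]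
    exact le_trans h5 h6
  have hfinal : ∑ i, ∑ j, φ i j * w i j ≤ (1 + α) * S := le_trans step2 step3
  nlinarith [mul_nonneg hα hS_nonneg, mul_nonneg hα hT_nonneg,
    mul_nonneg hα (mul_nonneg hα hS_nonneg)]
end

section
/- For every epoch index τ ∈ {1,…,ℓ} it holds that Q(τ) ≤ (ε/(16·e)) · Σ_{τ'=1}^{ℓ} λ·Q(τ') + 32·e·L/(λ·ε). -/
lemma gauss_sum_real (n : ℕ) : ∑ j ∈ Finset.range n, (j:ℝ) = (n:ℝ) * ((n:ℝ) - 1) / 2 := by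
  induction n with
  | zero => simp
  | succ m ih => rw [Finset.sum_range_succ, ih]; push_cast; ring

set_option maxHeartbeats 1000000 in
/-- Lemma: spreading the cost of an error over previous epochs.
For queue lengths `Q` at epoch starts that never exceed the elapsed time and change by at
most `L` per epoch, every epoch `τ ∈ {1,…,ℓ}` satisfies
`Q τ ≤ (ε/(16·e)) · Σ_{τ'=1}^{ℓ} λ·Q τ' + 32·e·L/(λ·ε)`. -/
theorem spread_cost_bound
    (L ℓ : ℕ) (hL : 1 ≤ L) (hℓ : 1 ≤ ℓ)
    (Q : ℕ → ℝ)
    (hQ_nonneg : ∀ τ, 1 ≤ τ → τ ≤ ℓ → 0 ≤ Q τ)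
    (hQ_le : ∀ τ, 1 ≤ τ → τ ≤ ℓ → Q τ ≤ ((τ : ℝ) - 1) * L + 1)
    (hQ_lip : ∀ τ τ', 1 ≤ τ → τ ≤ ℓ → 1 ≤ τ' → τ' ≤ ℓ →
      |Q τ - Q τ'| ≤ |(τ : ℝ) - (τ' : ℝ)| * L)
    (lam ε e : ℝ) (hlam0 : 0 < lam) (hlam1 : lam ≤ 1)
    (hε0 : 0 < ε) (hε1 : ε ≤ 1) (he : 1 ≤ e) :
    ∀ τ, 1 ≤ τ → τ ≤ ℓ →
      Q τ ≤ ε / (16 * e) * ∑ τ' ∈ Finset.Icc 1 ℓ, lam * Q τ' + 32 * e * L / (lam * ε) := by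
  intro τ hτ1 hτℓ
  have hS0 : 0 ≤ ∑ τ' ∈ Finset.Icc 1 ℓ, lam * Q τ' := by
    apply Finset.sum_nonneg
    intro i hi
    rw [Finset.mem_Icc] at hi
    exact mul_nonneg hlam0.le (hQ_nonneg i hi.1 hi.2)
  have hcoef : 0 < ε / (16 * e) := by positivity
  have hpos2 : (0:ℝ) < 32 * e * L / (lam * ε) := by
    have hL0 : (0:ℝ) < L := by exact_mod_cast hL
    positivity
  by_cases hcase : Q τ ≤ 32 * e * (L:ℝ) / (lam * ε)
  · nlinarith [mul_nonneg hcoef.le hS0]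
  push_neg at hcase
  have hL0 : (0:ℝ) < L := by exact_mod_cast hL
  have hMpos : 0 < Q τ := lt_trans hpos2 hcase
  set k := ⌊Q τ / L⌋₊ with hk
  have hkL : (k:ℝ) * L ≤ Q τ := by
    rw [← le_div_iff₀ hL0]
    exact Nat.floor_le (by positivity)
  have hklt : Q τ / L < k + 1 := Nat.lt_floor_add_one _
  clear hk
  clear_value k
  have hkτ : k ≤ τ := by
    have hq := hQ_le τ hτ1 hτℓ
    have hL1 : (1:ℝ) ≤ L := by exact_mod_cast hL
    have h1 : (k:ℝ) * L ≤ (τ:ℝ) * L := by nlinarith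
    have h2 : (k:ℝ) ≤ (τ:ℝ) := le_of_mul_le_mul_right h1 hL0
    exact_mod_cast h2
  -- each of the k previous epochs has a large queue
  have hsub : ∀ j ∈ Finset.range k, Q τ - (j:ℝ) * L ≤ Q (τ - j) := by
    intro j hj
    rw [Finset.mem_range] at hj
    have hjτ : j < τ := lt_of_lt_of_le hj hkτ
    have h1 : 1 ≤ τ - j := by omega
    have h2 : τ - j ≤ ℓ := by omega
    have hlip := hQ_lip τ (τ - j) hτ1 hτℓ h1 h2
    have hcast : ((τ - j : ℕ) : ℝ) = (τ:ℝ) - j := by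
      have : j ≤ τ := hjτ.le
      push_cast [this]; ring
    rw [hcast] at hlip
    have habs : |(τ:ℝ) - ((τ:ℝ) - j)| = j := by
      simp [abs_of_nonneg (by positivity : (0:ℝ) ≤ (j:ℝ))]
    rw [habs] at hlip
    have := abs_le.mp hlip
    linarith [this.2]
  have hinj : Set.InjOn (fun j => τ - j) (Finset.range k) := by
    intro a ha b hb hab
    simp only [Finset.coe_range, Set.mem_Iio] at ha hb
    have hab' : τ - a = τ - b := hab
    have ha' : a < τ := lt_of_lt_of_le ha hkτ
    have hb' : b < τ := lt_of_lt_of_le hb hkτ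
    omega
  have himg : (Finset.range k).image (fun j => τ - j) ⊆ Finset.Icc 1 ℓ := by
    intro x hx
    rw [Finset.mem_image] at hx
    obtain ⟨j, hj, rfl⟩ := hx
    rw [Finset.mem_range] at hj
    have : j < τ := lt_of_lt_of_le hj hkτ
    rw [Finset.mem_Icc]
    omega
  have hsum1 : ∑ j ∈ Finset.range k, Q (τ - j) ≤ ∑ τ' ∈ Finset.Icc 1 ℓ, Q τ' := by
    rw [← Finset.sum_image hinj]
    apply Finset.sum_le_sum_of_subset_of_nonneg himg
    intro i hi _
    rw [Finset.mem_Icc] at hi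
    exact hQ_nonneg i hi.1 hi.2
  have hgauss := gauss_sum_real k
  have hsum2 : (k:ℝ) * Q τ - L * ((k:ℝ) * ((k:ℝ) - 1) / 2) ≤ ∑ j ∈ Finset.range k, Q (τ - j) := by
    have := Finset.sum_le_sum hsub
    rw [Finset.sum_sub_distrib] at this
    simp only [Finset.sum_const, Finset.card_range, nsmul_eq_mul, ← Finset.sum_mul] at this
    rw [hgauss] at this
    linarith
  -- conclude
  have hk1 : (1:ℝ) ≤ k := by
    have h32 : (32:ℝ) ≤ 32 * e / (lam * ε) := by
      rw [le_div_iff₀ (by positivity)]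
      nlinarith
    have : (2:ℝ) < Q τ / L := by
      rw [lt_div_iff₀ hL0]
      have : 32 * e * (L:ℝ) / (lam * ε) = (32 * e / (lam * ε)) * L := by ring
      nlinarith
    have : (1:ℝ) < (k:ℝ) + 1 := by linarith
    have : (0:ℕ) < k := by exact_mod_cast Nat.cast_pos.mp (by linarith : (0:ℝ) < k)
    exact_mod_cast this
  have hSQ : (Q τ) * ((k:ℝ) + 1) / 2 ≤ ∑ τ' ∈ Finset.Icc 1 ℓ, Q τ' := by
    have h1 : L * ((k:ℝ) * ((k:ℝ) - 1) / 2) ≤ Q τ * ((k:ℝ) - 1) / 2 := by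
      have : (k:ℝ) * L * ((k:ℝ) - 1) ≤ Q τ * ((k:ℝ) - 1) := by
        apply mul_le_mul_of_nonneg_right hkL (by linarith)
      nlinarith
    nlinarith
  have hsum_eq : ∑ τ' ∈ Finset.Icc 1 ℓ, lam * Q τ' = lam * ∑ τ' ∈ Finset.Icc 1 ℓ, Q τ' := by
    rw [Finset.mul_sum]
  rw [hsum_eq]
  -- k+1 > Q τ / L > 32 e / (lam ε)
  have hkbig : 32 * e / (lam * ε) < (k:ℝ) + 1 := by
    have : 32 * e / (lam * ε) < Q τ / L := by
      rw [div_lt_div_iff₀ (by positivity) hL0]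
      have heq : 32 * e * (L:ℝ) / (lam * ε) * (lam * ε) = 32 * e * L := by
        field_simp
      have h2 := mul_lt_mul_of_pos_right hcase (mul_pos hlam0 hε0)
      rw [heq] at h2
      linarith
    linarith
  have hmain : Q τ ≤ ε / (16 * e) * (lam * ∑ τ' ∈ Finset.Icc 1 ℓ, Q τ') := by
    have hc : 32 * e < ((k:ℝ) + 1) * (lam * ε) := by
      rw [div_lt_iff₀ (by positivity)] at hkbig
      linarith
    have hstep : ε / (16 * e) * (lam * (Q τ * ((k:ℝ) + 1) / 2)) ≤
        ε / (16 * e) * (lam * ∑ τ' ∈ Finset.Icc 1 ℓ, Q τ') := by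
      apply mul_le_mul_of_nonneg_left _ hcoef.le
      exact mul_le_mul_of_nonneg_left hSQ hlam0.le
    have he0 : (0:ℝ) < 16 * e := by linarith
    have hlhs : Q τ ≤ ε / (16 * e) * (lam * (Q τ * ((k:ℝ) + 1) / 2)) := by
      rw [div_mul_eq_mul_div, le_div_iff₀ he0]
      nlinarith [mul_lt_mul_of_pos_left hc hMpos]
    linarith
  linarith
end

section
/- Let b : {1,…,ℓ} → {0,1} be an indicator sequence (of epochs in which an estimation error occurs) and set e = Σ_{τ=1}^{ℓ} b(τ). Then Σ_{τ=1}^{ℓ} Q(τ)·b(τ) ≤ (ε/16) · Σ_{τ=1}^{ℓ} λ·Q(τ) + (32·L/(λ·ε)) · e². -/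
set_option maxHeartbeats 1000000


/-- Lemma: bounding the total drift due to estimation errors.
For an indicator sequence `b` of error epochs with `e = Σ_{τ=1}^{ℓ} b τ` errors in total,
`Σ_{τ=1}^{ℓ} Q τ · b τ ≤ (ε/16) · Σ_{τ=1}^{ℓ} λ·Q τ + (32·L/(λ·ε)) · e²`. -/
theorem error_cost_bound
    (L ℓ : ℕ) (hL : 1 ≤ L) (hℓ : 1 ≤ ℓ)
    (Q : ℕ → ℝ)
    (hQ_nonneg : ∀ τ, 1 ≤ τ → τ ≤ ℓ → 0 ≤ Q τ)
    (hQ_le : ∀ τ, 1 ≤ τ → τ ≤ ℓ → Q τ ≤ ((τ : ℝ) - 1) * L + 1)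
    (hQ_lip : ∀ τ τ', 1 ≤ τ → τ ≤ ℓ → 1 ≤ τ' → τ' ≤ ℓ →
      |Q τ - Q τ'| ≤ |(τ : ℝ) - (τ' : ℝ)| * L)
    (lam ε : ℝ) (hlam0 : 0 < lam) (hlam1 : lam ≤ 1)
    (hε0 : 0 < ε) (hε1 : ε ≤ 1)
    (b : ℕ → ℝ) (hb : ∀ τ, 1 ≤ τ → τ ≤ ℓ → b τ = 0 ∨ b τ = 1)
    (e : ℝ) (he : e = ∑ τ ∈ Finset.Icc 1 ℓ, b τ) :
    ∑ τ ∈ Finset.Icc 1 ℓ, Q τ * b τ ≤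
      ε / 16 * ∑ τ ∈ Finset.Icc 1 ℓ, lam * Q τ + 32 * L / (lam * ε) * e ^ 2 := by
  classical
  set I := Finset.Icc 1 ℓ with hI
  have hL0 : (0:ℝ) < (L:ℝ) := by exact_mod_cast Nat.lt_of_lt_of_le Nat.zero_lt_one hL
  have hQ0 : ∀ τ ∈ I, 0 ≤ Q τ := by
    intro τ hτ
    rw [hI, Finset.mem_Icc] at hτ
    exact hQ_nonneg τ hτ.1 hτ.2
  have hb01 : ∀ τ ∈ I, b τ = 0 ∨ b τ = 1 := by
    intro τ hτ
    rw [hI, Finset.mem_Icc] at hτ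
    exact hb τ hτ.1 hτ.2
  have hbnn : ∀ τ ∈ I, 0 ≤ b τ := by
    intro τ hτ
    rcases hb01 τ hτ with h | h <;> rw [h] <;> norm_num
  have he0 : 0 ≤ e := he ▸ Finset.sum_nonneg hbnn
  have hSQ : 0 ≤ ∑ τ ∈ I, Q τ := Finset.sum_nonneg hQ0
  have hsum : ∑ τ ∈ I, lam * Q τ = lam * ∑ τ ∈ I, Q τ := (Finset.mul_sum _ _ _).symm
  have hd : 0 < lam * ε := mul_pos hlam0 hε0
  by_cases hall : ∀ τ ∈ I, b τ = 0
  · have h1 : ∑ τ ∈ I, Q τ * b τ = 0 :=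
      Finset.sum_eq_zero fun τ hτ => by rw [hall τ hτ, mul_zero]
    rw [h1, hsum]
    have h2 : 0 ≤ ε / 16 * (lam * ∑ τ ∈ I, Q τ) := by positivity
    have h3 : 0 ≤ 32 * (L:ℝ) / (lam * ε) * e ^ 2 := by positivity
    linarith
  · push_neg at hall
    obtain ⟨τ₀, hτ₀I, hτ₀⟩ := hall
    have hbτ₀ : b τ₀ = 1 := (hb01 τ₀ hτ₀I).resolve_left hτ₀
    set S : Finset ℕ := I.filter (fun τ => b τ = 1) with hSdef
    have hSne : S.Nonempty := ⟨τ₀, Finset.mem_filter.mpr ⟨hτ₀I, hbτ₀⟩⟩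
    obtain ⟨τs, hτsS, hmax⟩ := S.exists_max_image Q hSne
    have hτsI : τs ∈ I := (Finset.mem_filter.mp hτsS).1
    have hτsmem := Finset.mem_Icc.mp (hI ▸ hτsI)
    have hτs1 : 1 ≤ τs := hτsmem.1
    have hτsℓ : τs ≤ ℓ := hτsmem.2
    set M := Q τs with hM
    have hM0 : 0 ≤ M := hQ0 τs hτsI
    -- e ≥ 1
    have he1 : 1 ≤ e := by
      rw [he]
      calc (1:ℝ) = b τ₀ := hbτ₀.symm
        _ ≤ ∑ τ ∈ I, b τ := Finset.single_le_sum hbnn hτ₀I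
    -- Step 1 : LHS ≤ M * e
    have hLHS : ∑ τ ∈ I, Q τ * b τ ≤ M * e := by
      rw [he, Finset.mul_sum]
      apply Finset.sum_le_sum
      intro τ hτ
      rcases hb01 τ hτ with h | h
      · rw [h]; simp
      · rw [h, mul_one, mul_one]
        exact hmax τ (Finset.mem_filter.mpr ⟨hτ, h⟩)
    -- Step 3 : Σ Q ≥ M²/(4L)
    have hS' : M ^ 2 ≤ 4 * (L:ℝ) * ∑ τ ∈ I, Q τ := by
      rcases le_or_gt M (4 * L) with hcase | hcase
      · have h1 : M ≤ ∑ τ ∈ I, Q τ := Finset.single_le_sum hQ0 hτsI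
        nlinarith
      · -- M > 4L ≥ 4
        have hL1 : (1:ℝ) ≤ (L:ℝ) := by exact_mod_cast hL
        have hM4 : (4:ℝ) < M := by nlinarith
        have hMle : M ≤ ((τs : ℝ) - 1) * L + 1 := hQ_le τs hτs1 hτsℓ
        set k : ℕ := ⌊M / (2 * L)⌋₊ with hk
        have h2L : (0:ℝ) < 2 * L := by linarith
        have hk1 : (k:ℝ) ≤ M / (2 * L) := Nat.floor_le (by positivity)
        have hk1' : (k:ℝ) * (2 * L) ≤ M := (le_div_iff₀ h2L).mp hk1
        have hk2 : M / (2 * L) < (k:ℝ) + 1 := Nat.lt_floor_add_one _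
        have hk2' : M < ((k:ℝ) + 1) * (2 * L) := (div_lt_iff₀ h2L).mp hk2
        have hkτ : k ≤ τs - 1 := by
          have hcast : (k:ℝ) ≤ ((τs - 1 : ℕ) : ℝ) := by
            rw [Nat.cast_sub hτs1]
            push_cast
            nlinarith
          exact_mod_cast hcast
        set T : Finset ℕ := Finset.Icc (τs - k) τs with hT
        have hTsub : T ⊆ I := by
          intro τ hτ
          rw [hT, Finset.mem_Icc] at hτ
          rw [hI, Finset.mem_Icc]
          omega
        have hTQ : ∀ τ ∈ T, M / 2 ≤ Q τ := by
          intro τ hτ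
          rw [hT, Finset.mem_Icc] at hτ
          have h1τ : 1 ≤ τ := by omega
          have hτℓ : τ ≤ ℓ := le_trans hτ.2 hτsℓ
          have hlip := hQ_lip τs τ hτs1 hτsℓ h1τ hτℓ
          have habs : |(τs:ℝ) - (τ:ℝ)| ≤ (k:ℝ) := by
            have h1 : τs - τ ≤ k := by omega
            have h2 : (τs:ℝ) - (τ:ℝ) = ((τs - τ : ℕ) : ℝ) := by
              rw [Nat.cast_sub hτ.2]
            rw [h2, abs_of_nonneg (by positivity)]
            exact_mod_cast h1
          have h3 : |(τs:ℝ) - (τ:ℝ)| * L ≤ (k:ℝ) * L :=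
            mul_le_mul_of_nonneg_right habs (le_of_lt hL0)
          have h4 := abs_le.mp (le_trans hlip h3)
          nlinarith [h4.1, h4.2]
        have hkτs : k ≤ τs := le_trans hkτ (Nat.sub_le _ _)
        have hcard : T.card = k + 1 := by
          rw [hT, Nat.card_Icc]; omega
        have hsumT : ((k:ℝ) + 1) * (M / 2) ≤ ∑ τ ∈ T, Q τ := by
          have h1 : ∑ τ ∈ T, (M / 2) ≤ ∑ τ ∈ T, Q τ := Finset.sum_le_sum hTQ
          rwa [Finset.sum_const, hcard, nsmul_eq_mul, Nat.cast_add, Nat.cast_one] at h1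
        have hIT : ∑ τ ∈ T, Q τ ≤ ∑ τ ∈ I, Q τ :=
          Finset.sum_le_sum_of_subset_of_nonneg hTsub fun τ h _ => hQ0 τ h
        have hA := mul_le_mul_of_nonneg_left hsumT (by positivity : (0:ℝ) ≤ 4 * (L:ℝ))
        have hB := mul_le_mul_of_nonneg_left hIT (by positivity : (0:ℝ) ≤ 4 * (L:ℝ))
        have hC := mul_le_mul_of_nonneg_right (le_of_lt hk2') hM0
        linarith [hA, hB, hC]
    -- Step 4 : conclude
    have hfinal : M * e ≤ ε / 16 * (lam * ∑ τ ∈ I, Q τ) + 32 * (L:ℝ) / (lam * ε) * e ^ 2 := by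
      have h32 : 32 * (L:ℝ) / (lam * ε) * e ^ 2 = 32 * (L:ℝ) * e ^ 2 / (lam * ε) := by ring
      rw [h32]
      rw [← sub_le_iff_le_add', le_div_iff₀ hd]
      nlinarith [sq_nonneg (lam * ε * M - 32 * (L:ℝ) * e), sq_nonneg ((L:ℝ) * e),
        mul_nonneg (sq_nonneg (lam * ε)) (by linarith : (0:ℝ) ≤ 4 * (L:ℝ) * (∑ τ ∈ I, Q τ) - M ^ 2),
        hL0, hd, he0, hM0, mul_nonneg he0 hM0]
    rw [hsum]
    linarith
end

section
/- For all integers K ≥ 1, L ≥ 2 and ℓ ≥ 1 it holds that Σ_{τ=1}^{ℓ} 4·K·τ/(K + (τ−1)·L + 1)⁴ ≤ 5. -/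
lemma basel_aux : ∀ ℓ : ℕ, 1 ≤ ℓ →
    ∑ τ ∈ Finset.Icc 1 ℓ, 1 / (τ : ℝ) ^ 2 ≤ 2 - 1 / (ℓ : ℝ) := by
  intro ℓ hℓ
  induction ℓ, hℓ using Nat.le_induction with
  | base => norm_num
  | succ n hn ih =>
    rw [Finset.sum_Icc_succ_top (by omega)]
    have hn' : (1:ℝ) ≤ n := by exact_mod_cast hn
    have h1 : 1 / ((n:ℝ)+1)^2 ≤ 1/(n:ℝ) - 1/((n:ℝ)+1) := by
      rw [div_sub_div _ _ (by positivity) (by positivity)]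
      rw [div_le_div_iff₀ (by positivity) (by positivity)]
      ring_nf
      nlinarith
    push_cast
    linarith

/-- For all integers `K ≥ 1`, `L ≥ 2` and `ℓ ≥ 1`,
`Σ_{τ=1}^{ℓ} 4·K·τ/(K + (τ−1)·L + 1)⁴ ≤ 5`. -/
theorem error_probability_series_bound
    (K L ℓ : ℕ) (hK : 1 ≤ K) (hL : 2 ≤ L) (hℓ : 1 ≤ ℓ) :
    ∑ τ ∈ Finset.Icc 1 ℓ,
      4 * (K : ℝ) * (τ : ℝ) / ((K : ℝ) + ((τ : ℝ) - 1) * (L : ℝ) + 1) ^ 4 ≤ 5 := by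
  have hK' : (1:ℝ) ≤ K := by exact_mod_cast hK
  have hL' : (2:ℝ) ≤ L := by exact_mod_cast hL
  have key : ∀ τ ∈ Finset.Icc 1 ℓ,
      4 * (K : ℝ) * (τ : ℝ) / ((K : ℝ) + ((τ : ℝ) - 1) * (L : ℝ) + 1) ^ 4
        ≤ (1/2) * (1 / (τ:ℝ)^2) := by
    intro τ hτ
    have hτ1 : 1 ≤ τ := (Finset.mem_Icc.mp hτ).1
    have ht : (1:ℝ) ≤ (τ:ℝ) := by exact_mod_cast hτ1
    set t := (τ:ℝ) with htdef
    set D := (K:ℝ) + (t-1)*(L:ℝ) + 1 with hD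
    have hDK : (K:ℝ) ≤ D := by nlinarith
    have hDt : 2*t ≤ D := by nlinarith
    have hDpos : (0:ℝ) < D := by nlinarith
    have h3 : (2*t)^3 ≤ D^3 := pow_le_pow_left₀ (by positivity) hDt 3
    have hden : 8*(K:ℝ)*t^3 ≤ D^4 := by
      have := mul_le_mul hDK h3 (by positivity) (le_of_lt hDpos)
      nlinarith
    have h1 : 4*(K:ℝ)*t / D^4 ≤ 4*(K:ℝ)*t / (8*(K:ℝ)*t^3) := by
      apply div_le_div_of_nonneg_left (by positivity) (by positivity) hden
    have h2 : 4*(K:ℝ)*t / (8*(K:ℝ)*t^3) = (1/2) * (1/t^2) := by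
      field_simp
      ring
    linarith [h1, h2.le, h2.ge]
  calc ∑ τ ∈ Finset.Icc 1 ℓ,
      4 * (K : ℝ) * (τ : ℝ) / ((K : ℝ) + ((τ : ℝ) - 1) * (L : ℝ) + 1) ^ 4
      ≤ ∑ τ ∈ Finset.Icc 1 ℓ, (1/2) * (1 / (τ:ℝ)^2) := Finset.sum_le_sum key
    _ = (1/2) * ∑ τ ∈ Finset.Icc 1 ℓ, 1 / (τ:ℝ)^2 := by rw [Finset.mul_sum]
    _ ≤ (1/2) * (2 - 1/(ℓ:ℝ)) := by
        have := basel_aux ℓ hℓ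
        linarith
    _ ≤ 5 := by
        have hℓ' : (1:ℝ) ≤ ℓ := by exact_mod_cast hℓ
        have : 0 < 1/(ℓ:ℝ) := by positivity
        linarith
end
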